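/- Each ∼-class contains at most one quasi-ribbon word: if u, v ∈ 𝒜_n^* are quasi-ribbon words with u ∼ v, then u = v. -/

import Mathlib

/-!
Common setup: words over the alphabet `𝒜_n = {1,…,n}` (modelled as `List ℕ`),
quasi-Kashiwara operators, the quasi-crystal graph, Kashiwara operators,
quasi-ribbon words, and the hypoplactic congruence.
-/

namespace HypoCrystal

noncomputable section
open scoped Classical

/-- `u` is a word over the alphabet `𝒜_n = {1,…,n}`. -/
def IsWord (n : ℕ) (u : List ℕ) : Prop := ∀ a ∈ u, 1 ≤ a ∧ a ≤ n

/-- `u` has an `i`-inversion: some letter `i+1` occurs strictly to the left of some letter `i`. -/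
def HasInv (i : ℕ) (u : List ℕ) : Prop :=
  ∃ v w x : List ℕ, u = v ++ (i + 1) :: w ++ i :: x

/-- Replace the first (leftmost) occurrence of `a` by `b`, if any; otherwise `none`. -/
def replaceFirst (a b : ℕ) : List ℕ → Option (List ℕ)
  | [] => none
  | x :: xs => if x = a then some (b :: xs) else (replaceFirst a b xs).map (x :: ·)

/-- The quasi-Kashiwara raising operator `e_i` (partial map, `none` = undefined):
if `u` has an `i`-inversion it is undefined; otherwise it replaces the leftmost
letter `i+1` by `i` (undefined if there is no letter `i+1`). -/
def qe (i : ℕ) (u : List ℕ) : Option (List ℕ) :=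
  if HasInv i u then none else replaceFirst (i + 1) i u

/-- The quasi-Kashiwara lowering operator `f_i` (partial map, `none` = undefined):
if `u` has an `i`-inversion it is undefined; otherwise it replaces the rightmost
letter `i` by `i+1` (undefined if there is no letter `i`). -/
def qf (i : ℕ) (u : List ℕ) : Option (List ℕ) :=
  if HasInv i u then none else (replaceFirst i (i + 1) u.reverse).map List.reverse

/-- Weight of a word: `wt u a` is the number of occurrences of the letter `a` in `u`. -/
def wt (u : List ℕ) : ℕ → ℕ := fun a => u.count a

/-- There is an edge labelled `i` from `u` to `v` in the quasi-crystal graph `Γ(hypo_n)`. -/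
def Edge (n i : ℕ) (u v : List ℕ) : Prop := 1 ≤ i ∧ i < n ∧ qf i u = some v

/-- `u` and `v` are adjacent (in the underlying undirected graph) in `Γ(hypo_n)`. -/
def Adj (n : ℕ) (u v : List ℕ) : Prop := ∃ i, Edge n i u v ∨ Edge n i v u

/-- `v` lies in the connected component `Γ(hypo_n, u)` of `u` in the quasi-crystal graph. -/
def SameComp (n : ℕ) : List ℕ → List ℕ → Prop := Relation.ReflTransGen (Adj n)

/-- `u` is a highest-weight word: no raising operator `e_i` is defined on `u`. -/
def HighestWeight (n : ℕ) (u : List ℕ) : Prop := ∀ i, 1 ≤ i → i < n → qe i u = none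

/-- `θ` is a quasi-crystal isomorphism from the component of `u` onto the component of `v`:
a weight-preserving bijection preserving labelled edges in both directions. -/
def IsQCIso (n : ℕ) (u v : List ℕ) (θ : List ℕ → List ℕ) : Prop :=
  Set.BijOn θ {x | SameComp n u x} {y | SameComp n v y} ∧
  (∀ x, SameComp n u x → wt (θ x) = wt x) ∧
  (∀ x y, SameComp n u x → SameComp n u y → ∀ i, (Edge n i x y ↔ Edge n i (θ x) (θ y)))

/-- `u ∼ v`: there is a quasi-crystal isomorphism between the components of `u` and `v`
taking `u` to `v`. -/
def Sim (n : ℕ) (u v : List ℕ) : Prop :=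
  ∃ θ : List ℕ → List ℕ, IsQCIso n u v θ ∧ θ u = v

/-- The standardization of `u`: position `k` receives the rank (starting at 1) of the
pair `(u_k, k)` among all pairs `(u_l, l)` ordered lexicographically. -/
def std (u : List ℕ) : List ℕ :=
  (List.range u.length).map fun k =>
    1 + ((List.range u.length).filter fun l =>
      u.getD l 0 < u.getD k 0 ∨ (u.getD l 0 = u.getD k 0 ∧ l < k)).length

/-- The maximal strictly decreasing factors of a word (the columns of its
quasi-ribbon tabloid, each read bottom-to-top). -/
def decFactors : List ℕ → List (List ℕ)
  | [] => []
  | a :: rest =>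
    match decFactors rest with
    | (b :: f) :: fs => if b < a then (a :: b :: f) :: fs else [a] :: (b :: f) :: fs
    | l => [a] :: l

/-- `w` is a quasi-ribbon word: its quasi-ribbon tabloid is a quasi-ribbon tableau,
i.e. the bottom entry of each column is ≤ the top entry of the next column. -/
def IsQRWord (w : List ℕ) : Prop :=
  (decFactors w).Chain' fun c d => c.headD 0 ≤ d.getLastD 0

/-- Row lengths (top to bottom) of the ribbon diagram whose column heights
(left to right) are given. -/
def rowLengths : List ℕ → List ℕ
  | [] => []
  | [d] => List.replicate d 1
  | d :: e :: rest =>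
    List.replicate (d - 1) 1 ++
      (match rowLengths (e :: rest) with
       | [] => [1]
       | r :: rs => (r + 1) :: rs)

/-- The shape (as a composition, listed top row first) of the quasi-ribbon tabloid of `w`. -/
def shape (w : List ℕ) : List ℕ := rowLengths ((decFactors w).map List.length)

/-- Columns of the quasi-ribbon tableau of shape `α` whose `j`-th row consists
entirely of symbols `j`, where rows are labelled starting from `j₀`. -/
def hwCols : List ℕ → ℕ → List (List ℕ)
  | [], _ => []
  | [a], j => List.replicate a [j]
  | a :: b :: rest, j =>
    List.replicate (a - 1) [j] ++
      (match hwCols (b :: rest) (j + 1) with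
       | [] => [[j]]
       | c :: cs => (c ++ [j]) :: cs)

/-- The column reading of the quasi-ribbon tableau of shape `α` whose `j`-th row
consists entirely of symbols `j`. -/
def hwQR (α : List ℕ) : List ℕ := (hwCols α 1).flatten

/-- The defining relations `R_hypo` of the hypoplactic monoid of rank `n`. -/
inductive HypoRel (n : ℕ) : List ℕ → List ℕ → Prop
  | knuth1 {a b c : ℕ} : 1 ≤ a → a ≤ b → b < c → c ≤ n → HypoRel n [a, c, b] [c, a, b]
  | knuth2 {a b c : ℕ} : 1 ≤ a → a < b → b ≤ c → c ≤ n → HypoRel n [b, a, c] [b, c, a]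
  | quasi1 {a b c d : ℕ} : 1 ≤ a → a ≤ b → b < c → c ≤ d → d ≤ n →
      HypoRel n [c, a, d, b] [a, c, b, d]
  | quasi2 {a b c d : ℕ} : 1 ≤ a → a < b → b ≤ c → c < d → d ≤ n →
      HypoRel n [b, d, a, c] [d, b, c, a]

/-- The hypoplactic congruence `≡_hypo`: the congruence on the free monoid generated
by the relations `R_hypo`. -/
inductive HypoCong (n : ℕ) : List ℕ → List ℕ → Prop
  | of {u v} : HypoRel n u v → HypoCong n u v
  | refl (u) : HypoCong n u u
  | symm {u v} : HypoCong n u v → HypoCong n v u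
  | trans {u v w} : HypoCong n u v → HypoCong n v w → HypoCong n u w
  | append {u v u' v'} : HypoCong n u v → HypoCong n u' v' →
      HypoCong n (u ++ u') (v ++ v')

/-- The signature word of `u` for index `i`: each letter `i` becomes `(position, true)`
(that is, `+`) and each letter `i+1` becomes `(position, false)` (that is, `−`). -/
def signWord (i : ℕ) (u : List ℕ) : List (ℕ × Bool) :=
  ((List.range u.length).zip u).filterMap fun pa =>
    if pa.2 = i then some (pa.1, true)
    else if pa.2 = i + 1 then some (pa.1, false) else none

/-- Iteratively delete factors `−+` from a signature word, producing the reduced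
word `+^p −^q`. -/
def reduce : List (ℕ × Bool) → List (ℕ × Bool)
  | [] => []
  | x :: rest =>
    match reduce rest with
    | y :: rest' => if x.2 = false ∧ y.2 = true then rest' else x :: y :: rest'
    | [] => [x]

/-- The Kashiwara raising operator `ẽ_i`, computed by the signature rule: change to `i`
the letter `i+1` corresponding to the leftmost `−` of the reduced signature word. -/
def KE (i : ℕ) (u : List ℕ) : Option (List ℕ) :=
  (((reduce (signWord i u)).filter fun x => !x.2).head?).map fun x => u.set x.1 i

/-- The Kashiwara lowering operator `f̃_i`, computed by the signature rule: change to `i+1`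
the letter `i` corresponding to the rightmost `+` of the reduced signature word. -/
def KF (i : ℕ) (u : List ℕ) : Option (List ℕ) :=
  (((reduce (signWord i u)).filter fun x => x.2).getLast?).map fun x => u.set x.1 (i + 1)

/-- The Schützenberger involution on `𝒜_n^*`: reverse the word and replace each
letter `a` by `n − a + 1`. -/
def sharp (n : ℕ) (u : List ℕ) : List ℕ := u.reverse.map fun a => n + 1 - a

/-- The largest letter occurring in `u` (0 for the empty word). -/
def maxLetter (u : List ℕ) : ℕ := u.foldr max 0

/-- `β` is coarser than `α` (`β ⪯ α`): they have the same weight and every proper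
partial sum of `β` is a proper partial sum of `α`. -/
def Coarser (β α : List ℕ) : Prop :=
  β.sum = α.sum ∧ ∀ p < β.length, ∃ m < α.length, (β.take p).sum = (α.take m).sum

end
end HypoCrystal

/-!
`f_i` and `e_i` change one letter `i ↔ i + 1` that has no letter `i` or `i + 1` on its wrong side,
so every comparison `x ≤ y` between a letter and a later one survives; since the column
decomposition of a word only depends on these comparisons, the component of a quasi-ribbon word
consists of quasi-ribbon words. A highest-weight quasi-ribbon word is determined by its weight:
its columns are the chained intervals `[h₁, …, 1], [h₂, …, h₁], …`. Hence an isomorphism `θ` with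
`θ u = v` fixes the highest-weight word `g` of the component of `u`, and as `f_i` and `e_i` are
mutually inverse partial maps, a labelled-graph isomorphism fixing `g` fixes `u` as well.
-/

namespace HypoCrystal

theorem _root_.List.IsChain.imp_of_pairwise {α : Type*} {R S T : α → α → Prop} {l : List α}
    (hS : l.Pairwise S) (H : ∀ a b, S a b → R a b → T a b) (h : l.IsChain R) :
    l.IsChain T := by
  induction h with
  | nil => exact .nil
  | singleton => exact .singleton _
  | cons_cons hab _ ih =>
    obtain ⟨h1, h2⟩ := List.pairwise_cons.1 hS
    exact .cons_cons (H _ _ (h1 _ List.mem_cons_self) hab) (ih h2)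

theorem le_headD_of_isChain_gt {c : List ℕ} (hc : c.IsChain (· > ·)) {a : ℕ} (ha : a ∈ c) :
    a ≤ c.headD 0 := by
  rcases c with _ | ⟨x, c⟩
  · simp at ha
  · rcases List.mem_cons.1 ha with rfl | ha
    · simp
    · exact (List.pairwise_cons.1 hc.pairwise).1 a ha |>.le

theorem getLastD_le_of_isChain_gt {c : List ℕ} (hc : c.IsChain (· > ·)) {a : ℕ} (ha : a ∈ c) :
    c.getLastD 0 ≤ a := by
  obtain rfl | ⟨c, y, rfl⟩ := List.eq_nil_or_concat' c
  · simp at ha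
  · have := List.pairwise_append.1 hc.pairwise
    rcases List.mem_append.1 ha with ha | ha
    · simpa using (this.2.2 a ha y (by simp)).le
    · simp_all

theorem flatten_decFactors (u : List ℕ) : (decFactors u).flatten = u := by
  induction u with
  | nil => rfl
  | cons a rest ih =>
    rw [decFactors]
    split
    · split_ifs <;> simp_all
    · simp_all

theorem ne_nil_and_isChain_of_mem_decFactors {u c : List ℕ} (hc : c ∈ decFactors u) :
    c ≠ [] ∧ c.IsChain (· > ·) := by
  induction u generalizing c with
  | nil => simp [decFactors] at hc
  | cons a rest ih =>
    rw [decFactors] at hc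
    split at hc
    · next b f fs h =>
      have hbf := ih (c := b :: f) (by simp [h])
      split_ifs at hc with hba
      · rcases List.mem_cons.1 hc with rfl | hc
        · exact ⟨List.cons_ne_nil _ _, List.isChain_cons_cons.2 ⟨hba, hbf.2⟩⟩
        · exact ih (by simp [h, hc])
      · rcases List.mem_cons.1 hc with rfl | hc
        · simp
        · exact ih (by rwa [h])
    · rcases List.mem_cons.1 hc with rfl | hc
      · simp
      · exact ih hc

theorem exists_decFactors_map_eq (P : List (ℕ × ℕ))
    (hP : P.Pairwise fun x y => x.1 ≤ y.1 ↔ x.2 ≤ y.2) :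
    ∃ Q : List (List (ℕ × ℕ)), Q.flatten = P ∧
      decFactors (P.map Prod.fst) = Q.map (List.map Prod.fst) ∧
      decFactors (P.map Prod.snd) = Q.map (List.map Prod.snd) := by
  induction P with
  | nil => exact ⟨[], rfl, rfl, rfl⟩
  | cons x P ih =>
    obtain ⟨hx, hP⟩ := List.pairwise_cons.1 hP
    obtain ⟨Q, hQ, h1, h2⟩ := ih hP
    rcases Q with _ | ⟨_ | ⟨y, f⟩, Q⟩
    · exact ⟨[[x]], by simp_all, by simp [decFactors, h1], by simp [decFactors, h2]⟩
    · exact ⟨[x] :: [] :: Q, by simp_all, by simp [decFactors, h1], by simp [decFactors, h2]⟩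
    · have hxy : y.1 < x.1 ↔ y.2 < x.2 := by
        have := hx y (by simp [← hQ])
        omega
      by_cases hyx : y.1 < x.1
      · refine ⟨(x :: y :: f) :: Q, by simp_all, ?_, ?_⟩
        · simp [decFactors, h1, hyx]
        · simp [decFactors, h2, hxy.1 hyx]
      · refine ⟨[x] :: (y :: f) :: Q, by simp_all, ?_, ?_⟩
        · simp [decFactors, h1, hyx]
        · simp [decFactors, h2, mt hxy.2 hyx]

theorem IsQRWord.of_pairwise_le_iff {P : List (ℕ × ℕ)}
    (hP : P.Pairwise fun x y => x.1 ≤ y.1 ↔ x.2 ≤ y.2) (h : IsQRWord (P.map Prod.fst)) :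
    IsQRWord (P.map Prod.snd) := by
  obtain ⟨Q, hQ, h1, h2⟩ := exists_decFactors_map_eq P hP
  have hne : ∀ c ∈ Q, c ≠ [] := fun c hc => by
    have hc' : c.map Prod.fst ∈ decFactors (P.map Prod.fst) := h1 ▸ List.mem_map_of_mem hc
    simpa using (ne_nil_and_isChain_of_mem_decFactors hc').1
  have hpw := (List.pairwise_flatten.1 (hQ ▸ hP)).2
  rw [IsQRWord, h1, List.Chain', List.isChain_map] at h
  rw [IsQRWord, h2, List.Chain', List.isChain_map]
  refine h.imp_of_pairwise (List.Pairwise.and_mem.1 hpw) ?_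
  rintro c d ⟨hc, hd, hcd⟩
  obtain ⟨x, c, rfl⟩ := List.exists_cons_of_ne_nil (hne _ hc)
  obtain ⟨d, y, rfl⟩ := List.eq_nil_or_concat' d |>.resolve_left (hne _ hd)
  simpa using (hcd x (by simp) y (by simp)).1

theorem IsQRWord.replace {v w : List ℕ} {a b : ℕ} (h : IsQRWord (v ++ a :: w))
    (hv : ∀ x ∈ v, x ≤ a ↔ x ≤ b) (hw : ∀ y ∈ w, a ≤ y ↔ b ≤ y) : IsQRWord (v ++ b :: w) := by
  let P := v.map (fun x => (x, x)) ++ (a, b) :: w.map (fun y => (y, y))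
  have hP : P.Pairwise fun x y => x.1 ≤ y.1 ↔ x.2 ≤ y.2 := by
    simp only [P, List.pairwise_append, List.pairwise_cons, List.pairwise_map, List.mem_map,
      List.mem_cons]
    refine ⟨List.pairwise_of_forall fun _ _ => trivial,
      ⟨?_, List.pairwise_of_forall fun _ _ => trivial⟩, ?_⟩
    · rintro _ ⟨y, hy, rfl⟩
      exact hw y hy
    · rintro _ ⟨x, hx, rfl⟩ _ (rfl | ⟨y, -, rfl⟩)
      exacts [hv x hx, Iff.rfl]
  have h1 : P.map Prod.fst = v ++ a :: w := by simp [P, Function.comp_def]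
  have h2 : P.map Prod.snd = v ++ b :: w := by simp [P, Function.comp_def]
  exact h2 ▸ IsQRWord.of_pairwise_le_iff hP (h1 ▸ h)

theorem IsQRWord.pairwise_decFactors {x : List ℕ} (h : IsQRWord x) :
    (decFactors x).Pairwise fun c d => ∀ a ∈ c, ∀ b ∈ d, a ≤ b := by
  let R : List ℕ → List ℕ → Prop := fun c d => c ≠ [] ∧ d ≠ [] ∧ ∀ a ∈ c, ∀ b ∈ d, a ≤ b
  have : Trans R R R := ⟨fun ⟨hc, hd, hcd⟩ ⟨_, he, hde⟩ => ⟨hc, he, fun a ha b hb =>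
    have ⟨z, hz⟩ := List.exists_mem_of_ne_nil _ hd
    (hcd a ha z hz).trans (hde z hz b hb)⟩⟩
  refine (List.IsChain.pairwise (R := R) ?_).imp fun hR => hR.2.2
  refine List.IsChain.imp_of_mem_imp (fun c d hc hd hcd => ?_) h
  obtain ⟨hc, hcc⟩ := ne_nil_and_isChain_of_mem_decFactors hc
  obtain ⟨hd, hdc⟩ := ne_nil_and_isChain_of_mem_decFactors hd
  exact ⟨hc, hd, fun a ha b hb =>
    (le_headD_of_isChain_gt hcc ha).trans (hcd.trans (getLastD_le_of_isChain_gt hdc hb))⟩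

theorem replaceFirst_eq_none_iff {a b : ℕ} {l : List ℕ} : replaceFirst a b l = none ↔ a ∉ l := by
  induction l with
  | nil => simp [replaceFirst]
  | cons x l ih => by_cases hx : x = a <;> simp [replaceFirst, hx, ih, Ne.symm]

theorem replaceFirst_eq_some_iff {a b : ℕ} {l m : List ℕ} :
    replaceFirst a b l = some m ↔ ∃ s t, l = s ++ a :: t ∧ a ∉ s ∧ m = s ++ b :: t := by
  induction l generalizing m with
  | nil => simp [replaceFirst]
  | cons x l ih =>
    by_cases hx : x = a
    · subst hx
      simp only [replaceFirst, if_pos, Option.some.injEq]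
      constructor
      · rintro rfl
        exact ⟨[], l, by simp⟩
      · rintro ⟨_ | ⟨y, s⟩, t, h, hs, rfl⟩ <;> simp_all
    · simp only [replaceFirst, if_neg hx, Option.map_eq_some_iff, ih]
      constructor
      · rintro ⟨_, ⟨s, t, rfl, hs, rfl⟩, rfl⟩
        exact ⟨x :: s, t, by simp, by simp [hs, Ne.symm hx], by simp⟩
      · rintro ⟨_ | ⟨y, s⟩, t, h, hs, rfl⟩
        · simp_all
        · simp only [List.cons_append, List.cons.injEq, List.mem_cons, not_or] at h hs
          obtain ⟨rfl, rfl⟩ := h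
          exact ⟨_, ⟨s, t, rfl, hs.2, rfl⟩, rfl⟩

theorem not_hasInv_iff_pairwise {i : ℕ} {u : List ℕ} :
    ¬ HasInv i u ↔ u.Pairwise fun a b => a = i + 1 → b ≠ i := by
  rw [List.pairwise_iff_forall_sublist]
  constructor
  · rintro h a b hab rfl rfl
    obtain ⟨r₁, r₂, rfl, h₁, h₂⟩ := List.cons_sublist_iff.1 hab
    obtain ⟨s, t, rfl⟩ := List.append_of_mem h₁
    obtain ⟨s', t', rfl⟩ := List.append_of_mem (List.singleton_sublist.1 h₂)
    exact h ⟨s, t ++ s', t', by simp⟩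
  · rintro h ⟨v, w, x, rfl⟩
    exact h (List.cons_sublist_iff.2 ⟨v ++ [i + 1], w ++ i :: x, by simp, by simp, by simp⟩)
      rfl rfl

theorem qf_eq_some_iff {i : ℕ} {u y : List ℕ} :
    qf i u = some y ↔
      ¬ HasInv i u ∧ ∃ v w, u = v ++ i :: w ∧ i ∉ w ∧ y = v ++ (i + 1) :: w := by
  by_cases h : HasInv i u
  · simp [qf, h]
  · rw [qf, if_neg h]
    simp only [Option.map_eq_some_iff, replaceFirst_eq_some_iff, h, not_false_eq_true, true_and]
    constructor
    · rintro ⟨_, ⟨s, t, hu, hs, rfl⟩, rfl⟩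
      exact ⟨t.reverse, s.reverse, by simpa using congrArg List.reverse hu, by simpa using hs,
        by simp⟩
    · rintro ⟨v, w, rfl, hw, rfl⟩
      exact ⟨_, ⟨w.reverse, v.reverse, by simp, by simpa using hw, rfl⟩, by simp⟩

theorem qe_eq_some_iff {i : ℕ} {u y : List ℕ} :
    qe i u = some y ↔
      ¬ HasInv i u ∧ ∃ v w, u = v ++ (i + 1) :: w ∧ (i + 1) ∉ v ∧ y = v ++ i :: w := by
  by_cases h : HasInv i u <;> simp [qe, h, replaceFirst_eq_some_iff]

theorem qe_eq_none_iff {i : ℕ} {u : List ℕ} : qe i u = none ↔ HasInv i u ∨ (i + 1) ∉ u := by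
  by_cases h : HasInv i u <;> simp [qe, h, replaceFirst_eq_none_iff]

theorem qe_eq_some_iff_qf_eq_some {i : ℕ} {x y : List ℕ} : qe i x = some y ↔ qf i y = some x := by
  simp only [qe_eq_some_iff, qf_eq_some_iff, not_hasInv_iff_pairwise]
  constructor
  · rintro ⟨hx, v, w, rfl, hv, rfl⟩
    simp only [List.pairwise_append, List.pairwise_cons] at hx
    refine ⟨?_, v, w, rfl, ?_, rfl⟩
    · simp only [List.pairwise_append, List.pairwise_cons]
      grind
    · grind
  · rintro ⟨hy, v, w, rfl, hw, rfl⟩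
    simp only [List.pairwise_append, List.pairwise_cons] at hy
    refine ⟨?_, v, w, rfl, ?_, rfl⟩
    · simp only [List.pairwise_append, List.pairwise_cons]
      grind
    · grind

theorem hasInv_of_hasInv_append {i : ℕ} {s w : List ℕ} (h : HasInv i (s ++ w)) (hs : i + 1 ∉ s) :
    HasInv i w := by
  contrapose! h
  rw [not_hasInv_iff_pairwise] at h ⊢
  simp only [List.pairwise_append, h, true_and]
  exact ⟨List.pairwise_of_forall_mem_list fun a ha _ _ he => absurd (he ▸ ha) hs,
    fun a ha _ _ he => absurd (he ▸ ha) hs⟩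

theorem mem_of_hasInv {i : ℕ} {u : List ℕ} (h : HasInv i u) : i ∈ u := by
  obtain ⟨v, w, x, rfl⟩ := h
  simp

theorem isQRWord_iff_of_qf_eq_some {i : ℕ} {x y : List ℕ} (h : qf i x = some y) :
    IsQRWord x ↔ IsQRWord y := by
  obtain ⟨hx, v, w, rfl, hw, rfl⟩ := qf_eq_some_iff.1 h
  have hv : i + 1 ∉ v := fun hv => hx (by
    obtain ⟨s, t, rfl⟩ := List.append_of_mem hv
    exact ⟨s, t, w, by simp⟩)
  have hv' : ∀ z ∈ v, z ≤ i ↔ z ≤ i + 1 := fun z hz => by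
    have : z ≠ i + 1 := fun h => hv (h ▸ hz)
    omega
  have hw' : ∀ z ∈ w, i ≤ z ↔ i + 1 ≤ z := fun z hz => by
    have : z ≠ i := fun h => hw (h ▸ hz)
    omega
  exact ⟨fun h => h.replace hv' hw',
    fun h => h.replace (fun z hz => (hv' z hz).symm) (fun z hz => (hw' z hz).symm)⟩

theorem isWord_iff_of_qf_eq_some {n i : ℕ} {x y : List ℕ} (hi : 1 ≤ i) (hin : i < n)
    (h : qf i x = some y) : IsWord n x ↔ IsWord n y := by
  obtain ⟨-, v, w, rfl, -, rfl⟩ := qf_eq_some_iff.1 h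
  simp [IsWord, or_imp, forall_and, hi, hin, hin.le]

section Components

variable {n : ℕ} {u x : List ℕ}

instance : Std.Symm (Adj n) := ⟨fun _ _ ⟨i, h⟩ => ⟨i, h.symm⟩⟩

theorem SameComp.symm (h : SameComp n u x) : SameComp n x u :=
  Std.Symm.symm (r := Relation.ReflTransGen (Adj n)) _ _ h

theorem SameComp.of_qf_iff {P : List ℕ → Prop}
    (hP : ∀ i x y, 1 ≤ i → i < n → qf i x = some y → (P x ↔ P y))
    (h : SameComp n u x) (hu : P u) : P x := by
  induction h with
  | refl => exact hu
  | tail _ hadj ih =>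
    obtain ⟨i, ⟨hi, hin, h⟩ | ⟨hi, hin, h⟩⟩ := hadj
    exacts [(hP i _ _ hi hin h).1 ih, (hP i _ _ hi hin h).2 ih]

theorem SameComp.isQRWord (h : SameComp n u x) (hu : IsQRWord u) : IsQRWord x :=
  h.of_qf_iff (fun _ _ _ _ _ => isQRWord_iff_of_qf_eq_some) hu

theorem SameComp.isWord (h : SameComp n u x) (hu : IsWord n u) : IsWord n x :=
  h.of_qf_iff (fun _ _ _ => isWord_iff_of_qf_eq_some) hu

theorem exists_sameComp_highestWeight (n : ℕ) (u : List ℕ) :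
    ∃ g, SameComp n u g ∧ HighestWeight n g := by
  induction hk : u.sum using Nat.strong_induction_on generalizing u with
  | _ k ih =>
    by_cases hu : HighestWeight n u
    · exact ⟨u, .refl, hu⟩
    simp only [HighestWeight, not_forall] at hu
    obtain ⟨i, hi, hin, he⟩ := hu
    obtain ⟨y, hy⟩ := Option.ne_none_iff_exists'.1 he
    have hsum : y.sum < k := by
      obtain ⟨-, v, w, rfl, -, rfl⟩ := qe_eq_some_iff.1 hy
      simp only [List.sum_append, List.sum_cons] at hk ⊢
      omega
    obtain ⟨g, hg, hgw⟩ := ih _ hsum y rfl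
    exact ⟨g, .head ⟨i, .inr ⟨hi, hin, qe_eq_some_iff_qf_eq_some.1 hy⟩⟩ hg, hgw⟩

end Components

/-- The columns, each read from bottom to top, of a quasi-ribbon tableau whose rows, numbered
from `t`, are filled with their own number: `[h₁, …, t]`, `[h₂, …, h₁]`, … with `t ≤ h₁ ≤ h₂ ≤ …`. -/
def IsChainedIntervals : ℕ → List (List ℕ) → Prop
  | _, [] => True
  | t, c :: cs => c.IsChain (· > ·) ∧ (∀ m, m ∈ c ↔ t ≤ m ∧ m ≤ c.headD 0) ∧
      t ≤ c.headD 0 ∧ IsChainedIntervals (c.headD 0) cs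

theorem IsChainedIntervals.le_of_mem_flatten {t : ℕ} {cs : List (List ℕ)}
    (h : IsChainedIntervals t cs) {y : ℕ} (hy : y ∈ cs.flatten) : t ≤ y := by
  induction cs generalizing t with
  | nil => simp at hy
  | cons c cs ih =>
    obtain ⟨-, hc, ht, hcs⟩ := h
    rcases List.mem_append.1 hy with hy | hy
    · exact ((hc y).1 hy).1
    · exact ht.trans (ih hcs hy)

theorem IsChainedIntervals.headD_le {t : ℕ} {c c' : List ℕ} {cs cs' : List (List ℕ)}
    (h : IsChainedIntervals t (c :: cs)) (h' : IsChainedIntervals t (c' :: cs'))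
    (hperm : (c :: cs).flatten.Perm (c' :: cs').flatten) : c.headD 0 ≤ c'.headD 0 := by
  obtain ⟨hch, hc, ht, hcs⟩ := h
  obtain ⟨hch', hc', ht', hcs'⟩ := h'
  by_contra! hlt
  set k := c'.headD 0
  have hk : List.count k (c ++ cs.flatten) = 1 := by
    rw [List.count_append, List.count_eq_one_of_mem hch.pairwise.nodup ((hc k).2 ⟨ht', hlt.le⟩),
      List.count_eq_zero.2 fun hk => absurd (hcs.le_of_mem_flatten hk) (not_le.2 hlt)]
  rcases cs' with _ | ⟨d, cs'⟩
  · have : c.headD 0 ∈ c' := by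
      simpa using hperm.subset (List.mem_append_left _ ((hc _).2 ⟨ht, le_rfl⟩))
    exact absurd ((hc' _).1 this).2 (not_le.2 hlt)
  · have h2 : 2 ≤ List.count k (c' ++ (d :: cs').flatten) := by
      rw [List.count_append, List.count_eq_one_of_mem hch'.pairwise.nodup ((hc' k).2 ⟨ht', le_rfl⟩)]
      have : k ∈ d := (hcs'.2.1 k).2 ⟨le_rfl, hcs'.2.2.1⟩
      have := List.count_pos_iff.2 (List.mem_flatten_of_mem (L := d :: cs') List.mem_cons_self this)
      omega
    have := hperm.count_eq k
    simp only [List.flatten_cons] at this h2 hk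
    omega

theorem IsChainedIntervals.eq {t : ℕ} {cs cs' : List (List ℕ)} (h : IsChainedIntervals t cs)
    (h' : IsChainedIntervals t cs') (hperm : cs.flatten.Perm cs'.flatten) : cs = cs' := by
  induction cs generalizing t cs' with
  | nil =>
    rcases cs' with _ | ⟨c', cs'⟩
    · rfl
    · have : t ∈ c' := (h'.2.1 t).2 ⟨le_rfl, h'.2.2.1⟩
      simpa [this] using hperm.symm.subset (List.mem_append_left _ this)
  | cons c cs ih =>
    rcases cs' with _ | ⟨c', cs'⟩
    · have : t ∈ c := (h.2.1 t).2 ⟨le_rfl, h.2.2.1⟩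
      simpa [this] using hperm.subset (List.mem_append_left _ this)
    · have hhead := (h.headD_le h' hperm).antisymm (h'.headD_le h hperm.symm)
      have hcc' : c = c' := by
        refine List.Perm.eq_of_pairwise' (r := (· > ·)) h.1.pairwise h'.1.pairwise ?_
        rw [List.perm_ext_iff_of_nodup h.1.pairwise.nodup h'.1.pairwise.nodup]
        intro m
        rw [h.2.1, h'.2.1, hhead]
      subst hcc'
      rw [ih h.2.2.2 h'.2.2.2 ((List.perm_append_left_iff c).1 hperm)]

theorem isChainedIntervals_of_hasInv {t : ℕ} {cs : List (List ℕ)}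
    (hcols : ∀ c ∈ cs, c ≠ [] ∧ c.IsChain (· > ·))
    (hpw : cs.Pairwise fun c d => ∀ a ∈ c, ∀ b ∈ d, a ≤ b)
    (hge : ∀ y ∈ cs.flatten, t ≤ y)
    (hinv : ∀ m ∈ cs.flatten, t < m → HasInv (m - 1) cs.flatten) :
    IsChainedIntervals t cs := by
  induction cs generalizing t with
  | nil => trivial
  | cons c cs ih =>
    obtain ⟨hne, hch⟩ := hcols c List.mem_cons_self
    obtain ⟨hc, hpw⟩ := List.pairwise_cons.1 hpw
    set top := c.headD 0
    have htop : top ∈ c := by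
      obtain ⟨x, c, rfl⟩ := List.exists_cons_of_ne_nil hne
      simp [top]
    have hle : ∀ a ∈ c, a ≤ top := fun a ha => le_headD_of_isChain_gt hch ha
    have hge' : ∀ y ∈ cs.flatten, top ≤ y := fun y hy => by
      obtain ⟨d, hd, hy⟩ := List.mem_flatten.1 hy
      exact hc d hd top htop y hy
    have hpred : ∀ m, t ≤ m → m + 1 ∈ c → m ∈ c := fun m htm hm => by
      have hmem := mem_of_hasInv (hinv (m + 1) (by simp [hm]) (by omega))
      rcases List.mem_append.1 hmem with hmem | hmem
      · simpa using hmem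
      · exact absurd (hge' _ hmem) (by have := hle _ hm; omega)
    have htt : t ≤ top := hge top (by simp [htop])
    refine ⟨hch, fun m => ⟨fun hm => ⟨hge m (by simp [hm]), hle m hm⟩, ?_⟩, htt, ?_⟩
    · rintro ⟨htm, hmh⟩
      induction hmh using Nat.decreasingInduction with
      | self => exact htop
      | of_succ j _ ih => exact hpred j htm (ih (by omega))
    · refine ih (fun d hd => hcols d (by simp [hd])) hpw hge' fun m hm hhm => ?_
      refine hasInv_of_hasInv_append (s := c) (hinv m (by simp [hm]) (by omega)) ?_
      intro hmc
      have := hle _ hmc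
      omega

theorem hasInv_of_highestWeight {n : ℕ} {x : List ℕ} (hx : IsWord n x) (hxh : HighestWeight n x)
    {m : ℕ} (hm : m ∈ x) (h1m : 1 < m) : HasInv (m - 1) x := by
  have := hxh (m - 1) (by omega) (by have := (hx m hm).2; omega)
  rw [qe_eq_none_iff, Nat.sub_add_cancel h1m.le] at this
  exact this.resolve_right (not_not.2 hm)

theorem IsQRWord.isChainedIntervals_decFactors {n : ℕ} {x : List ℕ} (hx : IsQRWord x)
    (hxw : IsWord n x) (hxh : HighestWeight n x) : IsChainedIntervals 1 (decFactors x) :=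
  isChainedIntervals_of_hasInv (fun _ => ne_nil_and_isChain_of_mem_decFactors)
    hx.pairwise_decFactors
    (fun y hy => (hxw y (flatten_decFactors x ▸ hy)).1)
    (fun m hm h1m => by
      rw [flatten_decFactors] at hm ⊢
      exact hasInv_of_highestWeight hxw hxh hm h1m)

theorem eq_of_highestWeight_of_perm {n : ℕ} {x y : List ℕ} (hx : IsQRWord x) (hy : IsQRWord y)
    (hxw : IsWord n x) (hxh : HighestWeight n x) (hyh : HighestWeight n y) (hxy : x.Perm y) :
    x = y := by
  have hyw : IsWord n y := fun a ha => hxw a (hxy.mem_iff.2 ha)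
  rw [← flatten_decFactors x, ← flatten_decFactors y,
    (hx.isChainedIntervals_decFactors hxw hxh).eq (hy.isChainedIntervals_decFactors hyw hyh)
      (by rwa [flatten_decFactors, flatten_decFactors])]

namespace IsQCIso

variable {n : ℕ} {u v x : List ℕ} {θ : List ℕ → List ℕ}

theorem sameComp (hθ : IsQCIso n u v θ) (hx : SameComp n u x) : SameComp n v (θ x) :=
  hθ.1.mapsTo hx

theorem perm (hθ : IsQCIso n u v θ) (hx : SameComp n u x) : x.Perm (θ x) :=
  List.perm_iff_count.2 fun a => (congrFun (hθ.2.1 x hx) a).symm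

theorem highestWeight (hθ : IsQCIso n u v θ) (hx : SameComp n u x) (hxh : HighestWeight n x) :
    HighestWeight n (θ x) := by
  intro i hi hin
  refine Option.eq_none_iff_forall_ne_some.2 fun z hz => ?_
  have hzx : Edge n i z (θ x) := ⟨hi, hin, qe_eq_some_iff_qf_eq_some.1 hz⟩
  obtain ⟨z, hz', rfl⟩ := hθ.1.surjOn ((hθ.sameComp hx).tail ⟨i, .inr hzx⟩)
  have := qe_eq_some_iff_qf_eq_some.2 ((hθ.2.2 z x hz' hx i).2 hzx).2.2
  simp [hxh i hi hin] at this

theorem apply_eq_self_of_apply_eq_self (hθ : IsQCIso n u v θ) {g : List ℕ} (hg : SameComp n u g)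
    (hθg : θ g = g) (hx : SameComp n u x) : θ x = x := by
  have hgx : SameComp n g x := hg.symm.trans hx
  clear hx
  induction hgx with
  | refl => exact hθg
  | @tail y z hgy hyz ih =>
    have hy : SameComp n u y := hg.trans hgy
    have hz : SameComp n u z := hy.tail hyz
    obtain ⟨i, he | he⟩ := hyz
    · have := ((hθ.2.2 y z hy hz i).1 he).2.2
      rw [ih, he.2.2] at this
      exact (Option.some.inj this).symm
    · have := ((hθ.2.2 z y hz hy i).1 he).2.2
      rw [ih] at this
      exact Option.some.inj ((qe_eq_some_iff_qf_eq_some.2 this).symm.trans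
        (qe_eq_some_iff_qf_eq_some.2 he.2.2))

end IsQCIso

theorem atMostOne_quasiRibbon_word_per_sim_class_general (n : ℕ) (u v : List ℕ)
    (hu : IsWord n u) (hqu : IsQRWord u) (hqv : IsQRWord v)
    (h : Sim n u v) : u = v := by
  obtain ⟨θ, hθ, rfl⟩ := h
  obtain ⟨g, hg, hgh⟩ := exists_sameComp_highestWeight n u
  have hθg : θ g = g :=
    (eq_of_highestWeight_of_perm (hg.isQRWord hqu) ((hθ.sameComp hg).isQRWord hqv)
      (hg.isWord hu) hgh (hθ.highestWeight hg hgh) (hθ.perm hg)).symm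
  exact (hθ.apply_eq_self_of_apply_eq_self hg hθg .refl).symm

/-- Each `∼`-class contains at most one quasi-ribbon word:
if `u, v ∈ 𝒜_n^*` are quasi-ribbon words with `u ∼ v`, then `u = v`. -/
theorem atMostOne_quasiRibbon_word_per_sim_class (n : ℕ) (u v : List ℕ)
    (hu : IsWord n u) (hv : IsWord n v) (hqu : IsQRWord u) (hqv : IsQRWord v)
    (h : Sim n u v) : u = v :=
  atMostOne_quasiRibbon_word_per_sim_class_general n u v hu hqu hqv h

end HypoCrystal
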